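/- Let K be a field of characteristic different from 2 and let a, b, c be nonzero elements of K. Then the quadratic form ⟨⟨a,b⟩⟩ ⊥ ⟨⟨a,c⟩⟩ ⊥ ⟨⟨a,bc⟩⟩ ⊥ H² (of dimension 16) is equivalent to ⟨⟨a,b,c⟩⟩ ⊥ ⟨⟨a,bc,−1⟩⟩ (of dimension 16). (This is the equidimensional form of the Witt-ring computation ⟨⟨a,b⟩⟩ + ⟨⟨a,c⟩⟩ + ⟨⟨a,bc⟩⟩ = ⟨⟨a,b,c⟩⟩ + 2·⟨⟨a,bc⟩⟩ carried out in Lemma 3.1 of the paper.) -/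

import Mathlib

open QuadraticMap

/-- The `m`-fold Pfister form `⟨⟨a₁,…,a_m⟩⟩`: the diagonal quadratic form of dimension `2^m`
whose entries are the products `∏_{i ∈ S} (−a_i)` over all subsets `S` of `{1,…,m}`,
here modeled with subsets `S : Fin m → Bool`. -/
noncomputable def pfister (K : Type*) [Field K] {m : ℕ} (a : Fin m → K) :
    QuadraticForm K ((Fin m → Bool) → K) :=
  weightedSumSquares K (fun S : Fin m → Bool => ∏ i : Fin m, if S i then -a i else 1)

/-- `H^m`: the orthogonal sum of `m` copies of the hyperbolic plane `⟨1, −1⟩`. -/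
noncomputable def hypPlanes (K : Type*) [Field K] (m : ℕ) :
    QuadraticForm K (Fin m × Fin 2 → K) :=
  weightedSumSquares K (fun p : Fin m × Fin 2 => if p.2 = 0 then (1 : K) else -1)

/-! Splitting off the last slot gives `⟨⟨v, x⟩⟩ ≃ ⟨⟨v⟩⟩ ⊥ -x⟨⟨v⟩⟩`, and `q ⊥ -q` is hyperbolic
for every nondegenerate diagonal `q`, so `H² ≃ bc⟨⟨a⟩⟩ ⊥ -bc⟨⟨a⟩⟩`. With `P = ⟨⟨a⟩⟩` both sides
then become orthogonal sums of the same six forms `⟨⟨a,b⟩⟩, P, -cP, ⟨⟨a,bc⟩⟩, bcP, -bcP`: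
`⟨⟨a,b,c⟩⟩ ≃ ⟨⟨a,b⟩⟩ ⊥ -cP ⊥ bcP` and `⟨⟨a,bc,-1⟩⟩ ≃ ⟨⟨a,bc⟩⟩ ⊥ P ⊥ -bcP`. -/

namespace QuadraticMap

section Prod

variable {R M₁ M₂ M₃ M₄ M₅ M₆ N : Type*} [CommSemiring R] [AddCommMonoid N] [Module R N]
  [AddCommMonoid M₁] [AddCommMonoid M₂] [AddCommMonoid M₃] [AddCommMonoid M₄]
  [AddCommMonoid M₅] [AddCommMonoid M₆] [Module R M₁] [Module R M₂] [Module R M₃]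
  [Module R M₄] [Module R M₅] [Module R M₆]

theorem Equivalent.smul {Q₁ : QuadraticMap R M₁ N} {Q₂ : QuadraticMap R M₂ N}
    (h : Q₁.Equivalent Q₂) (r : R) : (r • Q₁).Equivalent (r • Q₂) :=
  h.map fun f => { f.toLinearEquiv with map_app' := fun x => by simp }

theorem smul_prod (r : R) (Q₁ : QuadraticMap R M₁ N) (Q₂ : QuadraticMap R M₂ N) :
    r • Q₁.prod Q₂ = (r • Q₁).prod (r • Q₂) := by
  ext x
  simp [smul_add]

theorem equivalent_prod_shuffle (Q₁ : QuadraticMap R M₁ N) (Q₂ : QuadraticMap R M₂ N)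
    (Q₃ : QuadraticMap R M₃ N) (Q₄ : QuadraticMap R M₄ N) (Q₅ : QuadraticMap R M₅ N)
    (Q₆ : QuadraticMap R M₆ N) :
    (Q₁.prod ((Q₂.prod Q₃).prod (Q₄.prod (Q₅.prod Q₆)))).Equivalent
      ((Q₁.prod (Q₃.prod Q₅)).prod (Q₄.prod (Q₂.prod Q₆))) :=
  ⟨{ toFun := fun x => ((x.1, x.2.1.2, x.2.2.2.1), x.2.2.1, x.2.1.1, x.2.2.2.2)
     invFun := fun y => (y.1.1, (y.2.2.1, y.1.2.1), y.2.1, y.1.2.2, y.2.2.2)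
     map_add' := fun _ _ => rfl
     map_smul' := fun _ _ => rfl
     left_inv := fun _ => rfl
     right_inv := fun _ => rfl
     map_app' := fun _ => by simp only [prod_apply]; abel }⟩

end Prod

section Diagonal

variable {R : Type*} [CommSemiring R]

theorem weightedSumSquares_equivalent_of_equiv {ι₁ ι₂ : Type*} [Fintype ι₁] [Fintype ι₂]
    (e : ι₁ ≃ ι₂) {w₁ : ι₁ → R} {w₂ : ι₂ → R} (h : ∀ i, w₁ i = w₂ (e i)) :
    (weightedSumSquares R w₁).Equivalent (weightedSumSquares R w₂) := by
  refine ⟨{ toLinearEquiv := LinearEquiv.funCongrLeft R R e.symm, map_app' := fun f => ?_ }⟩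
  rw [weightedSumSquares_apply, weightedSumSquares_apply]
  refine (Fintype.sum_equiv e _ _ fun i => ?_).symm
  simp [LinearMap.funLeft, h i]

theorem weightedSumSquares_sumElim_equivalent {ι₁ ι₂ : Type*} [Fintype ι₁] [Fintype ι₂]
    (u : ι₁ → R) (v : ι₂ → R) :
    (weightedSumSquares R (Sum.elim u v)).Equivalent
      ((weightedSumSquares R u).prod (weightedSumSquares R v)) :=
  ⟨{ toLinearEquiv := LinearEquiv.sumArrowLequivProdArrow ι₁ ι₂ R R
     map_app' := fun f => by
      simp [weightedSumSquares_apply, LinearEquiv.sumArrowLequivProdArrow,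
        Fintype.sum_sum_type] }⟩

theorem weightedSumSquares_prod_equivalent_pi {ι κ : Type*} [Fintype ι] [Fintype κ]
    (w : ι × κ → R) :
    (weightedSumSquares R w).Equivalent (pi fun i => weightedSumSquares R fun k => w (i, k)) :=
  ⟨{ toLinearEquiv := LinearEquiv.curry R R ι κ
     map_app' := fun f => by
      simp [weightedSumSquares_apply, pi_apply, Fintype.sum_prod_type] }⟩

theorem smul_weightedSumSquares {ι : Type*} [Fintype ι] (r : R) (w : ι → R) :
    r • weightedSumSquares R w = weightedSumSquares R (r • w) := by
  ext x
  simp [weightedSumSquares_apply, Finset.mul_sum, mul_assoc]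

end Diagonal

end QuadraticMap

section Field

variable {K : Type*} [Field K]

/- `x² - y² = (x + y)(x - y)` and `d u² - d v² = d (u + v)(u - v)` agree under
`x + y = d (u + v)`, `x - y = u - v`. -/
theorem weightedSumSquares_hyperbolicPlane_equivalent (h2 : (2 : K) ≠ 0) {d : K} (hd : d ≠ 0) :
    (weightedSumSquares K fun j : Fin 2 => if j = 0 then d else -d).Equivalent
      (weightedSumSquares K fun j : Fin 2 => if j = 0 then (1 : K) else -1) :=
  ⟨{ toFun := fun f => ![d * (f 0 + f 1) / 2 + (f 0 - f 1) / 2,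
                         d * (f 0 + f 1) / 2 - (f 0 - f 1) / 2]
     invFun := fun g => ![(g 0 + g 1) / (2 * d) + (g 0 - g 1) / 2,
                          (g 0 + g 1) / (2 * d) - (g 0 - g 1) / 2]
     map_add' := fun x y => by ext i; fin_cases i <;> simp <;> ring
     map_smul' := fun r x => by ext i; fin_cases i <;> simp <;> ring
     left_inv := fun f => by ext i; fin_cases i <;> simp <;> field_simp <;> ring
     right_inv := fun g => by ext i; fin_cases i <;> simp <;> field_simp <;> ring
     map_app' := fun f => by simp [weightedSumSquares_apply]; field_simp; ring }⟩

theorem prod_neg_equivalent_hypPlanes {ι : Type*} [Fintype ι] (h2 : (2 : K) ≠ 0) {w : ι → K}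
    (hw : ∀ i, w i ≠ 0) :
    ((weightedSumSquares K w).prod (weightedSumSquares K (-w))).Equivalent
      (hypPlanes K (Fintype.card ι)) := by
  let e : ι ⊕ ι ≃ Fin (Fintype.card ι) × Fin 2 :=
    (Equiv.boolProdEquivSum ι).symm.trans
      ((Equiv.prodComm _ _).trans (Equiv.prodCongr (Fintype.equivFin ι) finTwoEquiv.symm))
  let v : Fin (Fintype.card ι) × Fin 2 → K := fun p =>
    if p.2 = 0 then w ((Fintype.equivFin ι).symm p.1) else -w ((Fintype.equivFin ι).symm p.1)
  refine (weightedSumSquares_sumElim_equivalent w (-w)).symm.trans <|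
    (weightedSumSquares_equivalent_of_equiv (w₂ := v) e ?_).trans <|
    (weightedSumSquares_prod_equivalent_pi v).trans <|
    (Equivalent.pi fun i => ?_).trans (weightedSumSquares_prod_equivalent_pi _).symm
  · rintro (i | i) <;> simp [e, v, finTwoEquiv]
  · exact weightedSumSquares_hyperbolicPlane_equivalent h2 (hw _)

theorem pfister_snoc_equivalent {m : ℕ} (a : Fin m → K) (x : K) :
    (pfister K (Fin.snoc a x : Fin (m + 1) → K)).Equivalent
      ((pfister K a).prod ((-x) • pfister K a)) := by
  unfold pfister
  rw [smul_weightedSumSquares]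
  refine (weightedSumSquares_equivalent_of_equiv
    ((Fin.snocEquiv fun _ => Bool).symm.trans (Equiv.boolProdEquivSum _)) fun S => ?_).trans
    (weightedSumSquares_sumElim_equivalent _ _)
  rw [Fin.prod_univ_castSucc]
  simp only [Fin.snoc_castSucc, Fin.snoc_last, Equiv.trans_apply, Fin.snocEquiv_symm_apply,
    Equiv.boolProdEquivSum_apply]
  -- the remaining goals differ only in `Decidable` instances still phrased via `Fin.init S`
  cases S (Fin.last m)
  · simp only [Bool.false_eq_true, if_false, mul_one, Sum.elim_inl]
    rfl
  · simp only [if_true, Sum.elim_inr, Pi.smul_apply, smul_eq_mul, mul_comm]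
    rfl

theorem hypPlanes_equivalent_smul_pfister_prod (h2 : (2 : K) ≠ 0) {m : ℕ} {a : Fin m → K}
    (ha : ∀ i, a i ≠ 0) {d : K} (hd : d ≠ 0) :
    (hypPlanes K (2 ^ m)).Equivalent ((d • pfister K a).prod ((-d) • pfister K a)) := by
  have hw : ∀ S : Fin m → Bool, d * ∏ i, (if S i then -a i else 1) ≠ 0 := fun S =>
    mul_ne_zero hd <| Finset.prod_ne_zero_iff.2 fun i _ => by split_ifs <;> simp [ha i]
  have := prod_neg_equivalent_hypPlanes h2 hw
  rw [show Fintype.card (Fin m → Bool) = 2 ^ m by simp] at this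
  unfold pfister
  rw [smul_weightedSumSquares, smul_weightedSumSquares, neg_smul]
  exact this.symm

end Field

theorem stmt_2 {K : Type*} [Field K] (hchar : ringChar K ≠ 2)
    (a b c : K) (ha : a ≠ 0) (hb : b ≠ 0) (hc : c ≠ 0) :
    QuadraticMap.Equivalent
      ((pfister K ![a, b]).prod ((pfister K ![a, c]).prod
        ((pfister K ![a, b * c]).prod (hypPlanes K 2))))
      ((pfister K ![a, b, c]).prod (pfister K ![a, b * c, -1])) := by
  set P := pfister K ![a]
  have hH : (hypPlanes K 2).Equivalent (((b * c) • P).prod ((-(b * c)) • P)) :=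
    hypPlanes_equivalent_smul_pfister_prod (m := 1) (Ring.two_ne_zero hchar)
      (fun _ => ha) (mul_ne_zero hb hc)
  have hab := pfister_snoc_equivalent ![a] b
  have hac := pfister_snoc_equivalent ![a] c
  have hbc := pfister_snoc_equivalent ![a] (b * c)
  have habc := pfister_snoc_equivalent ![a, b] c
  have hbc1 := pfister_snoc_equivalent ![a, b * c] (-1)
  simp only [Matrix.Fin.snoc_vecCons, Matrix.Fin.snoc_vecEmpty, neg_neg, one_smul]
    at hab hac hbc habc hbc1
  have hcab : ((-c) • pfister K ![a, b]).Equivalent (((-c) • P).prod ((b * c) • P)) := by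
    convert hab.smul (-c) using 1
    rw [smul_prod, smul_smul, neg_mul_neg, mul_comm]
  exact ((Equivalent.refl _).prod (hac.prod ((Equivalent.refl _).prod hH))).trans <|
    (equivalent_prod_shuffle _ _ _ _ _ _).trans
      ((habc.trans ((Equivalent.refl _).prod hcab)).prod
        (hbc1.trans ((Equivalent.refl _).prod hbc))).symm
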